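/- arXiv:1210.6168 — 2 statements merged into one kernel-verified Lean document; each statement's English description precedes it below -/
import Mathlib

section
/- For every s ≥ 0, ∫_ℝ tanh(s + √s·z) · (2π)^{−1/2} e^{−z²/2} dz = ∫_ℝ tanh²(s + √s·z) · (2π)^{−1/2} e^{−z²/2} dz. -/
/-!
Put `x = s + √s z`. The reflection `z ↦ -2√s - z` of the Gaussian variable sends `x` to `-x` and
multiplies the standard Gaussian density by `e^{-2x}`. Since `1 - tanh x = e^{-2x} (1 + tanh x)`,
the integrand `(tanh x - tanh² x) · density = tanh x (1 - tanh x) · density` changes sign under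
this reflection, and as Lebesgue measure is invariant under `z ↦ c - z` its integral vanishes.
-/

open MeasureTheory Real ProbabilityTheory

theorem Real.continuous_tanh : Continuous tanh := by
  simp_rw [funext tanh_eq_sinh_div_cosh]
  exact continuous_sinh.div continuous_cosh fun x => (cosh_pos x).ne'

theorem Real.one_sub_tanh_eq_exp_mul_one_add_tanh (x : ℝ) :
    1 - tanh x = exp (-(2 * x)) * (1 + tanh x) := by
  have hx : exp (-(2 * x)) = exp (-x) / exp x := by
    rw [← exp_sub]; ring_nf
  rw [tanh_eq_sinh_div_cosh, sinh_eq, cosh_eq, hx]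
  field_simp
  ring

theorem integral_eq_zero_of_comp_sub_left_eq_neg {E : Type*} [NormedAddCommGroup E]
    [NormedSpace ℝ E] {f : ℝ → E} (a : ℝ) (hf : ∀ z, f (a - z) = -f z) :
    ∫ z, f z = 0 := by
  have : IsAddTorsionFree E := .of_isTorsionFree ℝ E
  have h := integral_sub_left_eq_self f volume a
  simp only [hf, integral_neg] at h
  exact neg_eq_self.mp h

theorem ProbabilityTheory.gaussianPDFReal_zero_one (z : ℝ) :
    gaussianPDFReal 0 1 z = (√(2 * π))⁻¹ * exp (-z ^ 2 / 2) := by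
  simp [gaussianPDFReal]

theorem ProbabilityTheory.gaussianPDFReal_zero_one_neg_two_mul_sub (a z : ℝ) :
    gaussianPDFReal 0 1 (-2 * a - z) = exp (-(2 * (a ^ 2 + a * z))) * gaussianPDFReal 0 1 z := by
  rw [gaussianPDFReal_zero_one, gaussianPDFReal_zero_one, mul_left_comm, ← exp_add]
  ring_nf

theorem integrable_tanh_pow_mul_gaussianPDFReal (a b : ℝ) (n : ℕ) :
    Integrable fun z => tanh (a + b * z) ^ n * gaussianPDFReal 0 1 z := by
  refine (integrable_gaussianPDFReal 0 1).bdd_mul (c := 1) ?_ (.of_forall fun z => ?_)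
  · exact ((continuous_tanh.comp (by fun_prop)).pow n).aestronglyMeasurable
  · simpa [abs_pow] using pow_le_one₀ (abs_nonneg _) (abs_tanh_lt_one (a + b * z)).le

theorem integral_tanh_sub_tanh_sq_mul_gaussianPDFReal (a : ℝ) :
    ∫ z, (tanh (a ^ 2 + a * z) - tanh (a ^ 2 + a * z) ^ 2) * gaussianPDFReal 0 1 z = 0 := by
  refine integral_eq_zero_of_comp_sub_left_eq_neg (-2 * a) fun z => ?_
  have hreflect : a ^ 2 + a * (-2 * a - z) = -(a ^ 2 + a * z) := by ring
  rw [hreflect, gaussianPDFReal_zero_one_neg_two_mul_sub, tanh_neg]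
  linear_combination (tanh (a ^ 2 + a * z) * gaussianPDFReal 0 1 z) *
    one_sub_tanh_eq_exp_mul_one_add_tanh (a ^ 2 + a * z)

/-- **Gaussian identity for the BPSK channel.**
For every `s ≥ 0`, the standard-Gaussian expectation of `tanh(s + √s·z)` equals that of
`tanh²(s + √s·z)`. -/
theorem gaussian_tanh_eq_tanh_sq (s : ℝ) (hs : 0 ≤ s) :
    (∫ z : ℝ,
        Real.tanh (s + Real.sqrt s * z) *
          ((Real.sqrt (2 * Real.pi))⁻¹ * Real.exp (-z ^ 2 / 2)))
      = ∫ z : ℝ,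
          (Real.tanh (s + Real.sqrt s * z)) ^ 2 *
            ((Real.sqrt (2 * Real.pi))⁻¹ * Real.exp (-z ^ 2 / 2)) := by
  simp_rw [← gaussianPDFReal_zero_one]
  rw [← sub_eq_zero, ← integral_sub (by simpa using integrable_tanh_pow_mul_gaussianPDFReal s √s 1)
    (integrable_tanh_pow_mul_gaussianPDFReal s √s 2)]
  simp_rw [← sub_mul]
  simpa only [sq_sqrt hs] using integral_tanh_sub_tanh_sq_mul_gaussianPDFReal √s
end

section
/- Define mmse : [0,∞) → ℝ by mmse(s) = 1 − ∫_ℝ tanh(s + √s·z) · (2π)^{−1/2} e^{−z²/2} dz. Then there exists a constant C > 0 such that mmse is C-Lipschitz on [0,∞): |mmse(s) − mmse(t)| ≤ C·|s − t| for all s, t ≥ 0. -/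
/-- The minimum mean-squared error of the BPSK-input real AWGN channel with
signal-to-noise ratio `s`:
`mmse(s) = 1 − ∫ tanh(s + √s·z) · (2π)^{−1/2} e^{−z²/2} dz`. -/
noncomputable def mmse (s : ℝ) : ℝ :=
  1 - ∫ z : ℝ,
    Real.tanh (s + Real.sqrt s * z) * ((Real.sqrt (2 * Real.pi))⁻¹ * Real.exp (-z ^ 2 / 2))

/-!
Averaging over `z ↦ -z`, which preserves the standard Gaussian, replaces `tanh (s + √s z)` by its
even part `sinh (2s) / (cosh (2s) + cosh (2√s z))`. This depends on `√s` only through the even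
function `cosh (2√s z)`, so its `s`-derivative stays bounded near `s = 0`: the dangerous term
`sinh (2√s z) · z / √s` is at most `2 z² cosh (2√s z)` because `|sinh x| ≤ |x| cosh x`. Hence the
even part is `(2 + 2z²)`-Lipschitz in `s ≥ 0`, and integrating gives the constant `𝔼[2 + 2Z²] = 4`.
-/

open Real MeasureTheory ProbabilityTheory
open scoped NNReal

namespace Real

lemma abs_sinh_le_cosh (x : ℝ) : |sinh x| ≤ cosh x := by
  rw [abs_le]
  constructor <;> linarith [exp_pos x, exp_pos (-x), sinh_eq x, cosh_eq x]

lemma abs_tanh_le_one (x : ℝ) : |tanh x| ≤ 1 := by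
  rw [tanh_eq_sinh_div_cosh, abs_div, abs_of_pos (cosh_pos x), div_le_one (cosh_pos x)]
  exact abs_sinh_le_cosh x

@[fun_prop]
lemma continuous_tanh_s9 : Continuous tanh := by
  simp_rw [funext tanh_eq_sinh_div_cosh]
  exact continuous_sinh.div continuous_cosh fun x => (cosh_pos x).ne'

lemma abs_sinh_le_abs_mul_cosh (x : ℝ) : |sinh x| ≤ |x| * cosh x := by
  have hmono : Monotone fun y => y * cosh y - sinh y := by
    refine monotone_of_hasDerivAt_nonneg (f' := fun y => y * sinh y) (fun y => ?_) fun y => ?_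
    · exact (((hasDerivAt_id' y).fun_mul (hasDerivAt_cosh y)).fun_sub
        (hasDerivAt_sinh y)).congr_deriv (by ring)
    · rcases le_total 0 y with hy | hy
      · exact mul_nonneg hy (sinh_nonneg_iff.mpr hy)
      · exact mul_nonneg_of_nonpos_of_nonpos hy (sinh_nonpos_iff.mpr hy)
  have := hmono (abs_nonneg x)
  simp only [zero_mul, sinh_zero, sub_zero, cosh_abs] at this
  rw [abs_sinh]
  linarith

lemma tanh_add_tanh (u v : ℝ) :
    tanh u + tanh v = 2 * sinh (u + v) / (cosh (u + v) + cosh (u - v)) := by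
  have hden : cosh (u + v) + cosh (u - v) = 2 * (cosh u * cosh v) := by
    rw [cosh_add, cosh_sub]; ring
  rw [tanh_eq_sinh_div_cosh, tanh_eq_sinh_div_cosh, sinh_add, hden]
  field_simp [(cosh_pos u).ne', (cosh_pos v).ne']

end Real

instance ProbabilityTheory.isNegInvariant_gaussianReal_zero (v : ℝ≥0) :
    (gaussianReal 0 v).IsNegInvariant :=
  ⟨by rw [Measure.neg, gaussianReal_map_neg, neg_zero]⟩

lemma ProbabilityTheory.integral_sq_gaussianReal_zero (v : ℝ≥0) :
    ∫ x, x ^ 2 ∂gaussianReal 0 v = v := by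
  have h := variance_fun_id_gaussianReal (μ := 0) (v := v)
  rw [variance_eq_integral measurable_id'.aemeasurable, integral_id_gaussianReal] at h
  simpa using h

lemma MeasureTheory.integral_eq_integral_add_comp_neg_div_two {G : Type*} [MeasurableSpace G]
    [AddGroup G] [MeasurableNeg G] {μ : Measure G} [μ.IsNegInvariant] {f : G → ℝ}
    (hf : Integrable f μ) : ∫ x, f x ∂μ = ∫ x, (f x + f (-x)) / 2 ∂μ := by
  rw [integral_div, integral_add hf hf.comp_neg, integral_neg_eq_self]
  ring

noncomputable def tanhEvenPart (s z : ℝ) : ℝ := (tanh (s + √s * z) + tanh (s - √s * z)) / 2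

lemma tanhEvenPart_eq_sinh_div (s z : ℝ) :
    tanhEvenPart s z = sinh (2 * s) / (cosh (2 * s) + cosh (2 * √s * z)) := by
  rw [tanhEvenPart, tanh_add_tanh]
  ring_nf

lemma abs_tanhEvenPart_le_one (s z : ℝ) : |tanhEvenPart s z| ≤ 1 := by
  rw [tanhEvenPart, abs_div, abs_two, div_le_one two_pos]
  have h₁ := abs_tanh_le_one (s + √s * z)
  have h₂ := abs_tanh_le_one (s - √s * z)
  exact (abs_add_le _ _).trans (by linarith)

@[fun_prop]
lemma Continuous.tanhEvenPart {α : Type*} [TopologicalSpace α] {f g : α → ℝ}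
    (hf : Continuous f) (hg : Continuous g) : Continuous fun x => tanhEvenPart (f x) (g x) := by
  unfold _root_.tanhEvenPart
  fun_prop

/-- The quotient is the derivative of `sinh a / (cosh a + cosh b)` when `a' = 2` and
`sinh b * b' = w`. -/
lemma abs_deriv_sinh_div_cosh_add_cosh_le {a b w c : ℝ} (hc : 0 ≤ c) (hw : |w| ≤ c * cosh b) :
    |(2 * cosh a * (cosh a + cosh b) - sinh a * (2 * sinh a + w)) / (cosh a + cosh b) ^ 2|
      ≤ 2 + c := by
  have ha := one_le_cosh a
  have hb := one_le_cosh b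
  have hsinh : |sinh a| ≤ cosh a := abs_sinh_le_cosh a
  have hD : 0 < cosh a + cosh b := by linarith
  have hnum : 2 * cosh a * (cosh a + cosh b) - sinh a * (2 * sinh a + w)
      = 2 + 2 * cosh a * cosh b - sinh a * w := by
    linear_combination 2 * cosh_sq_sub_sinh_sq a
  have hsw : |sinh a * w| ≤ c * (cosh a * cosh b) := by
    rw [abs_mul]
    calc |sinh a| * |w| ≤ cosh a * (c * cosh b) :=
          mul_le_mul hsinh hw (abs_nonneg w) (by linarith)
      _ = c * (cosh a * cosh b) := by ring
  rw [hnum, abs_div, abs_of_pos (pow_pos hD 2), div_le_iff₀ (pow_pos hD 2)]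
  calc |2 + 2 * cosh a * cosh b - sinh a * w|
      ≤ |2 + 2 * cosh a * cosh b| + |sinh a * w| := abs_sub _ _
    _ ≤ 2 + 2 * cosh a * cosh b + c * (cosh a * cosh b) := by
        rw [abs_of_pos (by nlinarith)]
        linarith
    _ ≤ (2 + c) * (cosh a + cosh b) ^ 2 := by
        nlinarith [mul_le_mul ha hb zero_le_one (by linarith), sq_nonneg (cosh a - cosh b),
          mul_nonneg hc (sq_nonneg (cosh a - cosh b))]

lemma hasDerivAt_tanhEvenPart {s : ℝ} (hs : 0 < s) (z : ℝ) :
    HasDerivAt (tanhEvenPart · z)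
      ((2 * cosh (2 * s) * (cosh (2 * s) + cosh (2 * √s * z))
        - sinh (2 * s) * (2 * sinh (2 * s) + sinh (2 * √s * z) * (z / √s)))
        / (cosh (2 * s) + cosh (2 * √s * z)) ^ 2) s := by
  have hlin : HasDerivAt (fun u : ℝ => 2 * u) 2 s := by
    simpa using (hasDerivAt_id' s).const_mul (2 : ℝ)
  have hsqrt : HasDerivAt (fun u => 2 * √u * z) (z / √s) s :=
    (((hasDerivAt_sqrt hs.ne').const_mul 2).mul_const z).congr_deriv (by
      field_simp [(sqrt_pos.mpr hs).ne'])
  have hden := hlin.cosh.fun_add hsqrt.cosh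
  simp_rw [tanhEvenPart_eq_sinh_div]
  exact (hlin.sinh.div hden (add_pos (cosh_pos _) (cosh_pos _)).ne').congr_deriv (by ring)

lemma abs_sinh_mul_div_sqrt_le {s : ℝ} (hs : 0 < s) (z : ℝ) :
    |sinh (2 * √s * z) * (z / √s)| ≤ 2 * z ^ 2 * cosh (2 * √s * z) := by
  have hsqrt := sqrt_pos.mpr hs
  calc |sinh (2 * √s * z) * (z / √s)|
      ≤ |2 * √s * z| * cosh (2 * √s * z) * |z / √s| := by
        rw [abs_mul]
        exact mul_le_mul_of_nonneg_right (abs_sinh_le_abs_mul_cosh _) (abs_nonneg _)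
    _ = 2 * z ^ 2 * cosh (2 * √s * z) := by
        rw [abs_div, abs_mul, abs_mul, abs_two, abs_of_pos hsqrt, ← sq_abs z]
        field_simp

lemma lipschitzOnWith_tanhEvenPart (z : ℝ) :
    LipschitzOnWith (2 + 2 * ‖z‖₊ ^ 2) (tanhEvenPart · z) (Set.Ici 0) := by
  rw [← closure_Ioi]
  refine LipschitzOnWith.closure (by fun_prop) ?_
  refine (convex_Ioi 0).lipschitzOnWith_of_nnnorm_hasDerivWithin_le
    (fun s hs => (hasDerivAt_tanhEvenPart hs z).hasDerivWithinAt) fun s hs => ?_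
  rw [← NNReal.coe_le_coe, coe_nnnorm, Real.norm_eq_abs]
  push_cast
  rw [Real.norm_eq_abs, sq_abs]
  exact abs_deriv_sinh_div_cosh_add_cosh_le (by positivity) (abs_sinh_mul_div_sqrt_le hs z)

lemma mmse_eq_one_sub_integral_gaussianReal (s : ℝ) :
    mmse s = 1 - ∫ z, tanh (s + √s * z) ∂gaussianReal 0 1 := by
  rw [mmse, integral_gaussianReal_eq_integral_smul one_ne_zero, gaussianPDFReal_def]
  simp only [smul_eq_mul, NNReal.coe_one, mul_one, sub_zero, mul_comm (tanh _)]

lemma mmse_eq_one_sub_integral_tanhEvenPart (s : ℝ) :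
    mmse s = 1 - ∫ z, tanhEvenPart s z ∂gaussianReal 0 1 := by
  have hint : Integrable (fun z => tanh (s + √s * z)) (gaussianReal 0 1) :=
    .of_bound (by fun_prop) 1 (.of_forall fun z => abs_tanh_le_one _)
  rw [mmse_eq_one_sub_integral_gaussianReal, integral_eq_integral_add_comp_neg_div_two hint]
  simp only [tanhEvenPart, mul_neg, ← sub_eq_add_neg]

lemma lipschitzOnWith_mmse : LipschitzOnWith 4 mmse (Set.Ici 0) := by
  refine LipschitzOnWith.of_dist_le_mul fun s hs t ht => ?_
  have hint (u : ℝ) : Integrable (tanhEvenPart u) (gaussianReal 0 1) :=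
    .of_bound (by fun_prop) 1 (.of_forall fun z => abs_tanhEvenPart_le_one u z)
  have hsq : Integrable (fun z : ℝ => z ^ 2) (gaussianReal 0 1) :=
    (memLp_id_gaussianReal 2).integrable_sq
  have hpoint (z : ℝ) : ‖tanhEvenPart t z - tanhEvenPart s z‖ ≤ (2 + 2 * z ^ 2) * |s - t| := by
    simpa [Real.dist_eq, abs_sub_comm] using
      (lipschitzOnWith_tanhEvenPart z).dist_le_mul t ht s hs
  rw [Real.dist_eq, mmse_eq_one_sub_integral_tanhEvenPart, mmse_eq_one_sub_integral_tanhEvenPart,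
    sub_sub_sub_cancel_left, ← integral_sub (hint t) (hint s), ← Real.norm_eq_abs]
  calc ‖∫ z, tanhEvenPart t z - tanhEvenPart s z ∂gaussianReal 0 1‖
      ≤ ∫ z, (2 + 2 * z ^ 2) * |s - t| ∂gaussianReal 0 1 :=
        norm_integral_le_of_norm_le (((integrable_const 2).fun_add (hsq.const_mul 2)).mul_const _)
          (.of_forall hpoint)
    _ = 4 * |s - t| := by
        rw [integral_mul_const, integral_add (integrable_const 2) (hsq.const_mul 2),
          integral_const_mul, integral_sq_gaussianReal_zero]
        norm_num

/-- **The BPSK MMSE is Lipschitz on `[0,∞)`:** there is a constant `C > 0` such that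
`|mmse(s) − mmse(t)| ≤ C·|s − t|` for all `s, t ≥ 0`. -/
theorem mmse_lipschitzOn :
    ∃ C : ℝ, 0 < C ∧ ∀ s t : ℝ, 0 ≤ s → 0 ≤ t → |mmse s - mmse t| ≤ C * |s - t| :=
  ⟨4, four_pos, fun s t hs ht => by
    simpa [Real.dist_eq] using lipschitzOnWith_mmse.dist_le_mul s hs t ht⟩
end
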